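/- arXiv:1010.3688 — 2 statements merged into one kernel-verified Lean document; each statement's English description precedes it below -/
import Mathlib

section
/- Let f : ℝ^m → ℝ^m be a C¹ diffeomorphism that has the Lipschitz shadowing property with constants 𝓛, d₀ > 0. Let p : ℤ → ℝ^m be a complete trajectory of f (i.e. p_{k+1} = f(p_k) for all k ∈ ℤ) and set A_k = Df(p_k). Assume there is a constant N > 0 with ‖A_k‖ ≤ N for all k ∈ ℤ, and that f is uniformly differentiable along the trajectory: for every μ > 0 there exists δ > 0 such that for all k ∈ ℤ and all v ∈ ℝ^m with ‖v‖ ≤ δ one has ‖f(p_k + v) − p_{k+1} − A_k v‖ ≤ μ‖v‖. Fix a natural number n. Then for any sequence {w_k ∈ ℝ^m, k ∈ ℤ} such that ‖w_k‖ < 1 for k ∈ [−n, n] and w_k = 0 for k ∉ [−n, n], there exists a sequence {z_k ∈ ℝ^m, k ∈ ℤ} such that ‖z_k‖ ≤ 8𝓛 + 1 for all k ∈ ℤ and z_{k+1} = A_k z_k + w_k for all k ∈ [−n, n]. -/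
open Filter Topology

/-!
Perturb `p` by `d • w k` from time `-n` on: the resulting orbit `X` is a `d`-pseudotrajectory,
so some trajectory `q` shadows it within `L * d`. On the window `[-n, n + 1]` both `X` and `q`
stay `O(d)`-close to `p`, where `f` is uniformly linearized by `A`; hence `y = d⁻¹ • (X - q)` is
bounded by `L` and solves `y (k + 1) = A k (y k) + w k` up to a defect that vanishes with `d`.
By a discrete Gronwall estimate, the exact solution starting at `y (-n)` stays within
`(N + 1) ^ (2 n + 1)` times that defect of `y`, and the defect is chosen to make this `≤ 1`.
-/

/-- `f` has the Lipschitz shadowing property with constants `L`, `d₀`: every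
`d`-pseudotrajectory with `0 < d ≤ d₀` is `L·d`-shadowed by a complete trajectory of `f`. -/
def LipschitzShadowing {m : ℕ} (f : EuclideanSpace ℝ (Fin m) → EuclideanSpace ℝ (Fin m))
    (L d₀ : ℝ) : Prop :=
  ∀ d : ℝ, 0 < d → d ≤ d₀ →
    ∀ x : ℤ → EuclideanSpace ℝ (Fin m),
      (∀ k : ℤ, ‖x (k + 1) - f (x k)‖ < d) →
      ∃ q : ℤ → EuclideanSpace ℝ (Fin m),
        (∀ k : ℤ, q (k + 1) = f (q k)) ∧ ∀ k : ℤ, ‖x k - q k‖ ≤ L * d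

/-- The step estimate is only needed while `a` stays below `B`, which the bound itself ensures. -/
theorem le_mul_pow_of_le_mul_add {a : ℤ → ℝ} {K ε B : ℝ} {k₀ k₁ : ℤ} (hK : 0 ≤ K)
    (hε : 0 ≤ ε) (h₀ : a k₀ ≤ ε) (hB : ε * (K + 1) ^ (k₁ - k₀).toNat ≤ B)
    (hstep : ∀ k, k₀ ≤ k → k < k₁ → a k ≤ B → a (k + 1) ≤ K * a k + ε) :
    ∀ k, k₀ ≤ k → k ≤ k₁ → a k ≤ ε * (K + 1) ^ (k₁ - k₀).toNat := by
  have hmono : ∀ k ≤ k₁, ε * (K + 1) ^ (k - k₀).toNat ≤ ε * (K + 1) ^ (k₁ - k₀).toNat :=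
    fun k hk => by gcongr <;> [linarith; omega]
  suffices h : ∀ k, k₀ ≤ k → k ≤ k₁ → a k ≤ ε * (K + 1) ^ (k - k₀).toNat from
    fun k hk₀ hk₁ => (h k hk₀ hk₁).trans (hmono k hk₁)
  intro k hk₀
  induction k, hk₀ using Int.leInduction with
  | base => exact fun _ => by simpa using h₀
  | succ k hk₀ ih =>
    intro hk₁
    have ha := ih (by omega)
    have hpow : 1 ≤ (K + 1) ^ (k - k₀).toNat := one_le_pow₀ (by linarith)
    calc a (k + 1) ≤ K * a k + ε :=
          hstep k hk₀ (by omega) (ha.trans ((hmono k (by omega)).trans hB))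
      _ ≤ K * (ε * (K + 1) ^ (k - k₀).toNat) + ε := by gcongr
      _ ≤ ε * (K + 1) ^ (k + 1 - k₀).toNat := by
        rw [show (k + 1 - k₀).toNat = (k - k₀).toNat + 1 by omega, pow_succ]
        nlinarith

section Recurrence

variable {α : Type*} {F : ℤ → α → α} {k₀ k : ℤ}

def extendByRecurrence (F : ℤ → α → α) (k₀ : ℤ) (x : ℤ → α) (k : ℤ) : α :=
  if k ≤ k₀ then x k else F (k - 1) (extendByRecurrence F k₀ x (k - 1))
termination_by (k - k₀).toNat

theorem extendByRecurrence_of_le (x : ℤ → α) (hk : k ≤ k₀) :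
    extendByRecurrence F k₀ x k = x k := by
  rw [extendByRecurrence, if_pos hk]

theorem extendByRecurrence_add_one (x : ℤ → α) (hk : k₀ ≤ k) :
    extendByRecurrence F k₀ x (k + 1) = F k (extendByRecurrence F k₀ x k) := by
  rw [extendByRecurrence, if_neg (by omega), add_sub_cancel_right]

end Recurrence

variable {E : Type*} [NormedAddCommGroup E]

theorem norm_extendByRecurrence_add_sub_lt {f : E → E} {p w : ℤ → E} {d : ℝ} {k₀ : ℤ}
    (hp : ∀ k, p (k + 1) = f (p k)) (hw : ∀ k, ‖w k‖ < d) (k : ℤ) :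
    ‖extendByRecurrence (fun k x => f x + w k) k₀ p (k + 1) -
      f (extendByRecurrence (fun k x => f x + w k) k₀ p k)‖ < d := by
  rcases lt_or_ge k k₀ with hk | hk
  · rw [extendByRecurrence_of_le p hk, extendByRecurrence_of_le p hk.le, hp, sub_self,
      norm_zero]
    exact (norm_nonneg _).trans_lt (hw k)
  · rw [extendByRecurrence_add_one p hk, add_sub_cancel_left]
    exact hw k

variable [NormedSpace ℝ E]

theorem exists_bounded_solution_of_approx_solution {A : ℤ → E →L[ℝ] E} {N : ℝ}
    (hA : ∀ k, ‖A k‖ ≤ N) {b y : ℤ → E} {k₀ k₁ : ℤ} {R ε : ℝ} (hε : 0 ≤ ε)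
    (hy : ∀ k, ‖y k‖ ≤ R)
    (happrox : ∀ k, k₀ ≤ k → k < k₁ → ‖y (k + 1) - A k (y k) - b k‖ ≤ ε) :
    ∃ z : ℤ → E, (∀ k, ‖z k‖ ≤ R + ε * (N + 1) ^ (k₁ - k₀).toNat) ∧
      ∀ k, k₀ ≤ k → k < k₁ → z (k + 1) = A k (z k) + b k := by
  set Z := extendByRecurrence (fun k z => A k z + b k) k₀ y
  have hZ₀ : Z k₀ = y k₀ := extendByRecurrence_of_le y le_rfl
  have hZ : ∀ k, k₀ ≤ k → Z (k + 1) = A k (Z k) + b k := fun k hk =>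
    extendByRecurrence_add_one y hk
  have hN : 0 ≤ N := (norm_nonneg _).trans (hA 0)
  have hZy : ∀ k, k₀ ≤ k → k ≤ k₁ → ‖Z k - y k‖ ≤ ε * (N + 1) ^ (k₁ - k₀).toNat := by
    refine le_mul_pow_of_le_mul_add hN hε (by simpa [hZ₀]) le_rfl
      fun k hk₀ hk₁ _ => ?_
    calc ‖Z (k + 1) - y (k + 1)‖ = ‖A k (Z k - y k) - (y (k + 1) - A k (y k) - b k)‖ := by
          rw [hZ k hk₀, map_sub]; congr 1; abel
      _ ≤ ‖A k‖ * ‖Z k - y k‖ + ε := norm_sub_le_of_le ((A k).le_opNorm _) (happrox k hk₀ hk₁)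
      _ ≤ N * ‖Z k - y k‖ + ε := by gcongr; exact hA k
  classical
  refine ⟨fun k => if k₀ ≤ k ∧ k ≤ k₁ then Z k else 0, fun k => ?_, fun k hk₀ hk₁ => ?_⟩
  · dsimp only
    split_ifs with hk
    · calc ‖Z k‖ ≤ ‖y k‖ + ‖Z k - y k‖ := norm_le_insert' _ _
        _ ≤ _ := add_le_add (hy k) (hZy k hk.1 hk.2)
    · rw [norm_zero]
      exact add_nonneg ((norm_nonneg _).trans (hy k)) (by positivity)
  · dsimp only
    rw [if_pos (show k₀ ≤ k ∧ k ≤ k₁ by omega), if_pos (show k₀ ≤ k + 1 ∧ k + 1 ≤ k₁ by omega)]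
    exact hZ k hk₀

section Linearization

variable {f : E → E} {p : ℤ → E} {A : ℤ → E →L[ℝ] E} {μ δ : ℝ}

theorem norm_sub_sub_apply_sub_le
    (hlin : ∀ k v, ‖v‖ ≤ δ → ‖f (p k + v) - p (k + 1) - A k v‖ ≤ μ * ‖v‖) {k : ℤ} {x y : E}
    (hx : ‖x - p k‖ ≤ δ) (hy : ‖y - p k‖ ≤ δ) :
    ‖f x - f y - A k (x - y)‖ ≤ μ * (‖x - p k‖ + ‖y - p k‖) := by
  have hx' := hlin k _ hx
  have hy' := hlin k _ hy
  rw [add_sub_cancel] at hx' hy'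
  calc ‖f x - f y - A k (x - y)‖
      = ‖(f x - p (k + 1) - A k (x - p k)) - (f y - p (k + 1) - A k (y - p k))‖ := by
        simp only [map_sub]; congr 1; abel
    _ ≤ μ * ‖x - p k‖ + μ * ‖y - p k‖ := norm_sub_le_of_le hx' hy'
    _ = μ * (‖x - p k‖ + ‖y - p k‖) := by ring

variable {N d : ℝ} {w : ℤ → E} {k₀ k₁ : ℤ}

theorem norm_extendByRecurrence_sub_le
    (hlin : ∀ k v, ‖v‖ ≤ δ → ‖f (p k + v) - p (k + 1) - A k v‖ ≤ μ * ‖v‖) (hμ : 0 ≤ μ)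
    (hA : ∀ k, ‖A k‖ ≤ N) (hd : 0 ≤ d) (hw : ∀ k, ‖w k‖ ≤ d)
    (hδ : d * (N + μ + 1) ^ (k₁ - k₀).toNat ≤ δ) :
    ∀ k, k₀ ≤ k → k ≤ k₁ → ‖extendByRecurrence (fun k x => f x + w k) k₀ p k - p k‖ ≤
      d * (N + μ + 1) ^ (k₁ - k₀).toNat := by
  set X := extendByRecurrence (fun k x => f x + w k) k₀ p
  have hX : ∀ k, k₀ ≤ k → X (k + 1) = f (X k) + w k := fun k hk =>
    extendByRecurrence_add_one p hk
  have hN : 0 ≤ N := (norm_nonneg _).trans (hA 0)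
  refine le_mul_pow_of_le_mul_add (by positivity) hd (by simpa [X, extendByRecurrence_of_le])
    hδ fun k hk₀ _ hXk => ?_
  have hlin_k := hlin k (X k - p k) hXk
  rw [add_sub_cancel] at hlin_k
  calc ‖X (k + 1) - p (k + 1)‖
      = ‖(f (X k) - p (k + 1) - A k (X k - p k)) + A k (X k - p k) + w k‖ := by
        rw [hX k hk₀]; congr 1; abel
    _ ≤ μ * ‖X k - p k‖ + ‖A k‖ * ‖X k - p k‖ + d :=
        norm_add₃_le.trans (add_le_add_three hlin_k ((A k).le_opNorm _) (hw k))
    _ ≤ (N + μ) * ‖X k - p k‖ + d := by nlinarith [hA k, norm_nonneg (X k - p k)]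

theorem norm_smul_sub_linearized_step_le
    (hlin : ∀ k v, ‖v‖ ≤ δ → ‖f (p k + v) - p (k + 1) - A k v‖ ≤ μ * ‖v‖) (hμ : 0 ≤ μ)
    {X q : ℤ → E} {k : ℤ} {C L : ℝ} (hd : 0 < d) (hX : X (k + 1) = f (X k) + d • w k)
    (hq : q (k + 1) = f (q k)) (hXp : ‖X k - p k‖ ≤ C * d) (hXq : ‖X k - q k‖ ≤ L * d)
    (hδ : (L + C) * d ≤ δ) :
    ‖d⁻¹ • (X (k + 1) - q (k + 1)) - A k (d⁻¹ • (X k - q k)) - w k‖ ≤ μ * (L + 2 * C) := by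
  have hL : 0 ≤ L := nonneg_of_mul_nonneg_left ((norm_nonneg _).trans hXq) hd
  have hqp : ‖q k - p k‖ ≤ (L + C) * d := by
    calc ‖q k - p k‖ ≤ ‖X k - q k‖ + ‖X k - p k‖ := by
          simpa only [dist_eq_norm] using dist_triangle_left (q k) (p k) (X k)
      _ ≤ (L + C) * d := by linarith
  have hlin_k := norm_sub_sub_apply_sub_le hlin (hXp.trans (by nlinarith)) (hqp.trans hδ)
  calc ‖d⁻¹ • (X (k + 1) - q (k + 1)) - A k (d⁻¹ • (X k - q k)) - w k‖
      = d⁻¹ * ‖f (X k) - f (q k) - A k (X k - q k)‖ := by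
        rw [hX, hq, map_smul, ← norm_smul_of_nonneg (inv_nonneg.2 hd.le)]
        congr 1
        simp only [smul_sub, smul_add, inv_smul_smul₀ hd.ne']
        abel
    _ ≤ d⁻¹ * (μ * (C * d + (L + C) * d)) := by gcongr; exact hlin_k.trans (by gcongr)
    _ = μ * (L + 2 * C) := by field_simp; ring

end Linearization

theorem LipschitzShadowing.exists_approx_solution {m : ℕ}
    {f : EuclideanSpace ℝ (Fin m) → EuclideanSpace ℝ (Fin m)} {L d₀ : ℝ}
    (hshadow : LipschitzShadowing f L d₀) (hL : 0 ≤ L) (hd₀ : 0 < d₀)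
    {p : ℤ → EuclideanSpace ℝ (Fin m)} (hp : ∀ k, p (k + 1) = f (p k))
    {A : ℤ → EuclideanSpace ℝ (Fin m) →L[ℝ] EuclideanSpace ℝ (Fin m)} {N : ℝ}
    (hA : ∀ k, ‖A k‖ ≤ N)
    (hunif : ∀ μ : ℝ, 0 < μ → ∃ δ : ℝ, 0 < δ ∧
      ∀ k v, ‖v‖ ≤ δ → ‖f (p k + v) - p (k + 1) - A k v‖ ≤ μ * ‖v‖)
    {w : ℤ → EuclideanSpace ℝ (Fin m)} (hw : ∀ k, ‖w k‖ < 1) (k₀ k₁ : ℤ) {ε : ℝ} (hε : 0 < ε) :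
    ∃ y : ℤ → EuclideanSpace ℝ (Fin m), (∀ k, ‖y k‖ ≤ L) ∧
      ∀ k, k₀ ≤ k → k < k₁ → ‖y (k + 1) - A k (y k) - w k‖ ≤ ε := by
  have hN : 0 ≤ N := (norm_nonneg _).trans (hA 0)
  set C := (N + 2) ^ (k₁ - k₀).toNat
  have hC : 1 ≤ C := one_le_pow₀ (by linarith)
  set μ := min 1 (ε / (L + 2 * C))
  have hμ : 0 < μ := by positivity
  have hμ₁ : μ ≤ 1 := min_le_left _ _
  have hμε : μ * (L + 2 * C) ≤ ε := (le_div_iff₀ (by positivity)).1 (min_le_right _ _)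
  obtain ⟨δ, hδ, hlin⟩ := hunif μ hμ
  obtain ⟨d, hd, hdd₀, hdδ⟩ : ∃ d, 0 < d ∧ d ≤ d₀ ∧ (L + C) * d ≤ δ :=
    ⟨min d₀ (δ / (L + C)), by positivity, min_le_left _ _,
      (le_div_iff₀' (by positivity)).1 (min_le_right _ _)⟩
  have hdw : ∀ k, ‖d • w k‖ < d := fun k => by
    simpa [norm_smul, abs_of_pos hd] using mul_lt_mul_of_pos_left (hw k) hd
  set X := extendByRecurrence (fun k x => f x + d • w k) k₀ p
  obtain ⟨q, hq, hXq⟩ := hshadow d hd hdd₀ X (norm_extendByRecurrence_add_sub_lt hp hdw)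
  have hXp : ∀ k, k₀ ≤ k → k ≤ k₁ → ‖X k - p k‖ ≤ C * d := by
    have hpow : d * (N + μ + 1) ^ (k₁ - k₀).toNat ≤ C * d := by
      rw [mul_comm]; gcongr
      exact pow_le_pow_left₀ (by positivity) (by linarith) _
    exact fun k hk₀ hk₁ => (norm_extendByRecurrence_sub_le hlin hμ.le hA hd.le
      (fun k => (hdw k).le) (hpow.trans (by nlinarith)) k hk₀ hk₁).trans hpow
  refine ⟨fun k => d⁻¹ • (X k - q k), fun k => ?_, fun k hk₀ hk₁ => ?_⟩
  · rw [norm_smul, norm_inv, Real.norm_of_nonneg hd.le, inv_mul_le_iff₀ hd]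
    linarith [hXq k]
  · exact (norm_smul_sub_linearized_step_le hlin hμ.le hd (extendByRecurrence_add_one p hk₀)
      (hq k) (hXp k hk₀ hk₁.le) (hXq k) hdδ).trans hμε

theorem lemma2_finite_interval_solution_general
    {m : ℕ} (f : EuclideanSpace ℝ (Fin m) → EuclideanSpace ℝ (Fin m))
    (L d₀ : ℝ) (hL : 0 < L) (hd₀ : 0 < d₀) (hshadow : LipschitzShadowing f L d₀)
    (p : ℤ → EuclideanSpace ℝ (Fin m)) (hp : ∀ k : ℤ, p (k + 1) = f (p k))
    (A : ℤ → (EuclideanSpace ℝ (Fin m) →L[ℝ] EuclideanSpace ℝ (Fin m)))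
    (N : ℝ) (hAbound : ∀ k : ℤ, ‖A k‖ ≤ N)
    (hunif : ∀ μ : ℝ, 0 < μ → ∃ δ : ℝ, 0 < δ ∧
      ∀ k : ℤ, ∀ v : EuclideanSpace ℝ (Fin m), ‖v‖ ≤ δ →
        ‖f (p k + v) - p (k + 1) - A k v‖ ≤ μ * ‖v‖)
    (n : ℕ) (w : ℤ → EuclideanSpace ℝ (Fin m))
    (hw₁ : ∀ k : ℤ, -(n : ℤ) ≤ k → k ≤ n → ‖w k‖ < 1)
    (hw₂ : ∀ k : ℤ, ¬(-(n : ℤ) ≤ k ∧ k ≤ n) → w k = 0) :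
    ∃ z : ℤ → EuclideanSpace ℝ (Fin m),
      (∀ k : ℤ, ‖z k‖ ≤ 8 * L + 1) ∧
      ∀ k : ℤ, -(n : ℤ) ≤ k → k ≤ n → z (k + 1) = A k (z k) + w k := by
  have hw : ∀ k, ‖w k‖ < 1 := fun k => by
    by_cases hk : -(n : ℤ) ≤ k ∧ k ≤ n
    · exact hw₁ k hk.1 hk.2
    · simp [hw₂ k hk]
  have hN : 0 ≤ N := (norm_nonneg _).trans (hAbound 0)
  set J := ((n : ℤ) + 1 - -n).toNat
  obtain ⟨y, hy, happrox⟩ := hshadow.exists_approx_solution hL.le hd₀ hp hAbound hunif hw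
    (-n) (n + 1) (ε := ((N + 1) ^ J)⁻¹) (by positivity)
  obtain ⟨z, hz, hzsol⟩ :=
    exists_bounded_solution_of_approx_solution hAbound (by positivity) hy happrox
  refine ⟨z, fun k => (hz k).trans ?_, fun k hk₀ hk₁ => hzsol k hk₀ (by omega)⟩
  rw [inv_mul_cancel₀ (by positivity)]
  linarith

/-- **Lemma 2 of Pilyugin–Tikhomirov.** If a C¹ diffeomorphism `f` has the Lipschitz
shadowing property with constants `L, d₀`, then along any trajectory `{p_k}`, for any
finitely supported sequence `{w_k}` with `‖w_k‖ < 1` on `[-n,n]` and `w_k = 0` outside,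
there is a sequence `{z_k}` with `‖z_k‖ ≤ 8L + 1` solving `z_{k+1} = A_k z_k + w_k`
for `k ∈ [-n, n]`, where `A_k = Df(p_k)`. -/
theorem lemma2_finite_interval_solution
    {m : ℕ} (f g : EuclideanSpace ℝ (Fin m) → EuclideanSpace ℝ (Fin m))
    (hf : ContDiff ℝ 1 f) (hg : ContDiff ℝ 1 g)
    (hgf : Function.LeftInverse g f) (hfg : Function.RightInverse g f)
    (L d₀ : ℝ) (hL : 0 < L) (hd₀ : 0 < d₀) (hshadow : LipschitzShadowing f L d₀)
    (p : ℤ → EuclideanSpace ℝ (Fin m)) (hp : ∀ k : ℤ, p (k + 1) = f (p k))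
    (A : ℤ → (EuclideanSpace ℝ (Fin m) →L[ℝ] EuclideanSpace ℝ (Fin m)))
    (hA : ∀ k : ℤ, A k = fderiv ℝ f (p k))
    (N : ℝ) (hN : 0 < N) (hAbound : ∀ k : ℤ, ‖A k‖ ≤ N)
    (hunif : ∀ μ : ℝ, 0 < μ → ∃ δ : ℝ, 0 < δ ∧
      ∀ k : ℤ, ∀ v : EuclideanSpace ℝ (Fin m), ‖v‖ ≤ δ →
        ‖f (p k + v) - p (k + 1) - A k v‖ ≤ μ * ‖v‖)
    (n : ℕ) (w : ℤ → EuclideanSpace ℝ (Fin m))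
    (hw₁ : ∀ k : ℤ, -(n : ℤ) ≤ k → k ≤ n → ‖w k‖ < 1)
    (hw₂ : ∀ k : ℤ, ¬(-(n : ℤ) ≤ k ∧ k ≤ n) → w k = 0) :
    ∃ z : ℤ → EuclideanSpace ℝ (Fin m),
      (∀ k : ℤ, ‖z k‖ ≤ 8 * L + 1) ∧
      ∀ k : ℤ, -(n : ℤ) ≤ k → k ≤ n → z (k + 1) = A k (z k) + w k :=
  lemma2_finite_interval_solution_general f L d₀ hL hd₀ hshadow p hp A N hAbound hunif n w hw₁ hw₂
end

section
/- Let f : ℝ^m → ℝ^m be a C¹ diffeomorphism that has the Lipschitz shadowing property with constants 𝓛, d₀ > 0. Let p : ℤ → ℝ^m be a complete trajectory of f (i.e. p_{k+1} = f(p_k) for all k ∈ ℤ) and set A_k = Df(p_k). Assume there is a constant N > 0 with ‖A_k‖ ≤ N and ‖A_k⁻¹‖ ≤ N for all k ∈ ℤ, and that f is uniformly differentiable along the trajectory: for every μ > 0 there exists δ > 0 such that for all k ∈ ℤ and all v ∈ ℝ^m with ‖v‖ ≤ δ one has ‖f(p_k + v) − p_{k+1} − A_k v‖ ≤ μ‖v‖.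 Then B⁺(𝒜) + B⁻(𝒜) = ℝ^m, where 𝒜 = {A_k}, i.e. every vector of ℝ^m is the sum of a vector of B⁺(𝒜) and a vector of B⁻(𝒜). -/
open Filter Topology

/-!
Lipschitz shadowing makes the linearized equation `u (k + 1) = A k (u k) + w (k + 1)` admissible:
every bounded forcing `w` vanishing in the past has a bounded solution. It is obtained by
shadowing the orbit of `p` perturbed by `δ w`, dividing the shadowing error by `δ` and letting
`δ → 0` along an ultrafilter. By Perron's argument, admissibility forces every solution of the
homogeneous equation that is bounded in forward (backward) time to decay, and the bounded response
to a single kick `v` at time `0` splits `v` into two such initial values.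
-/

/-- Transition map `Φ(k,l)` for `k = l + n`, `n ≥ 0`:
`Φ(l+n+1, l) = A_{l+n} ∘ Φ(l+n, l)`. -/
noncomputable def PhiPos {m : ℕ}
    (A : ℤ → (EuclideanSpace ℝ (Fin m) ≃L[ℝ] EuclideanSpace ℝ (Fin m))) (l : ℤ) :
    ℕ → (EuclideanSpace ℝ (Fin m) →L[ℝ] EuclideanSpace ℝ (Fin m))
  | 0 => 1
  | n + 1 =>
      ((A (l + n) : EuclideanSpace ℝ (Fin m) →L[ℝ] EuclideanSpace ℝ (Fin m))).comp
        (PhiPos A l n)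

/-- Transition map `Φ(k,l)` for `l = k + n`, `n ≥ 0`:
`Φ(k, k+n+1) = Φ(k, k+n) ∘ A_{k+n}⁻¹`. -/
noncomputable def PhiNeg {m : ℕ}
    (A : ℤ → (EuclideanSpace ℝ (Fin m) ≃L[ℝ] EuclideanSpace ℝ (Fin m))) (k : ℤ) :
    ℕ → (EuclideanSpace ℝ (Fin m) →L[ℝ] EuclideanSpace ℝ (Fin m))
  | 0 => 1
  | n + 1 =>
      (PhiNeg A k n).comp
        (((A (k + n)).symm : EuclideanSpace ℝ (Fin m) →L[ℝ] EuclideanSpace ℝ (Fin m)))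

/-- The transition maps `Φ(k,l)`: `Φ(k,l) = A_{k-1} ∘ ⋯ ∘ A_l` for `l < k`,
`Φ(k,k) = Id`, and `Φ(k,l) = A_k⁻¹ ∘ ⋯ ∘ A_{l-1}⁻¹` for `l > k`. -/
noncomputable def Phi {m : ℕ}
    (A : ℤ → (EuclideanSpace ℝ (Fin m) ≃L[ℝ] EuclideanSpace ℝ (Fin m))) (k l : ℤ) :
    EuclideanSpace ℝ (Fin m) →L[ℝ] EuclideanSpace ℝ (Fin m) :=
  if l ≤ k then PhiPos A l (k - l).toNat else PhiNeg A k (l - k).toNat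

/-- `B⁺(𝒜) = {v : ‖Φ(k,0)v‖ → 0 as k → +∞}`. -/
def Bplus {m : ℕ}
    (A : ℤ → (EuclideanSpace ℝ (Fin m) ≃L[ℝ] EuclideanSpace ℝ (Fin m))) :
    Set (EuclideanSpace ℝ (Fin m)) :=
  {v | Tendsto (fun k : ℤ => ‖Phi A k 0 v‖) atTop (𝓝 0)}

/-- `B⁻(𝒜) = {v : ‖Φ(k,0)v‖ → 0 as k → -∞}`. -/
def Bminus {m : ℕ}
    (A : ℤ → (EuclideanSpace ℝ (Fin m) ≃L[ℝ] EuclideanSpace ℝ (Fin m))) :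
    Set (EuclideanSpace ℝ (Fin m)) :=
  {v | Tendsto (fun k : ℤ => ‖Phi A k 0 v‖) atBot (𝓝 0)}

open Asymptotics

theorem exists_orbit_eq_on_Iic {α : Type*} (F : ℤ → α → α) (a : ℤ) (x₀ : ℤ → α) :
    ∃ x : ℤ → α, (∀ k ≤ a, x k = x₀ k) ∧ ∀ k ≥ a, x (k + 1) = F k (x k) := by
  refine ⟨fun k => Int.inductionOn' k a (x₀ a) (fun k _ y => F k y) (fun k _ _ => x₀ (k - 1)),
    fun k hk => ?_, fun k hk => Int.inductionOn'_add_one hk⟩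
  obtain rfl | hk := hk.eq_or_lt
  · exact Int.inductionOn'_self
  · simpa using Int.inductionOn'_sub_one (motive := fun _ => α) (zero := x₀ a)
      (succ := fun k _ y => F k y) (pred := fun k _ _ => x₀ (k - 1)) (z := k + 1) (by omega)

theorem exists_forcedOrbit {E : Type*} [AddZeroClass E] {f : E → E} {p : ℤ → E}
    (hp : ∀ k, p (k + 1) = f (p k)) {w : ℤ → E} {a : ℤ} (hwa : ∀ k ≤ a, w k = 0) :
    ∃ x : ℤ → E, (∀ k ≤ a, x k = p k) ∧ ∀ k, x (k + 1) = f (x k) + w (k + 1) := by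
  obtain ⟨x, hxa, hx⟩ := exists_orbit_eq_on_Iic (fun k y => f y + w (k + 1)) a p
  refine ⟨x, hxa, fun k => (le_or_gt a k).elim (hx k) fun hk => ?_⟩
  rw [hxa _ hk, hxa _ hk.le, hwa _ hk, hp, add_zero]

section ForcedOrbit

variable {𝕜 E : Type*} [NontriviallyNormedField 𝕜] [NormedAddCommGroup E] [NormedSpace 𝕜 E]

theorem HasFDerivAt.isLittleO_sub_of_isBigO {F : Type*} [NormedAddCommGroup F]
    [NormedSpace 𝕜 F] {f : E → F} {f' : E →L[𝕜] F} {p : E} (hf : HasFDerivAt f f' p)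
    {α : Type*} {l : Filter α} {c : α → 𝕜} (hc : Tendsto c l (𝓝 0)) {y₁ y₂ : α → E}
    (h₁ : (fun t => y₁ t - p) =O[l] c) (h₂ : (fun t => y₂ t - p) =O[l] c) :
    (fun t => f (y₁ t) - f (y₂ t) - f' (y₁ t - y₂ t)) =o[l] c := by
  have remainder : ∀ y : α → E, (fun t => y t - p) =O[l] c →
      (fun t => f (y t) - f p - f' (y t - p)) =o[l] c := fun y hy =>
    (hf.isLittleO.comp_tendsto (tendsto_sub_nhds_zero_iff.1 (hy.trans_tendsto hc))).trans_isBigO hy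
  refine ((remainder y₁ h₁).sub (remainder y₂ h₂)).congr_left fun t => ?_
  simp only [map_sub]
  abel

theorem isBigO_forcedOrbit_sub {f : E → E} {p : ℤ → E} (hf : ∀ k, DifferentiableAt 𝕜 f (p k))
    (hp : ∀ k, p (k + 1) = f (p k)) {w : ℤ → E} {a : ℤ} {x : 𝕜 → ℤ → E}
    (hxa : ∀ δ, ∀ k ≤ a, x δ k = p k) (hx : ∀ δ k, x δ (k + 1) = f (x δ k) + δ • w (k + 1))
    (k : ℤ) : (fun δ => x δ k - p k) =O[𝓝 0] fun δ => δ := by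
  have hpast : ∀ k ≤ a, (fun δ => x δ k - p k) =O[𝓝 0] fun δ => δ := fun k hk => by
    simpa [hxa _ k hk] using isBigO_zero (fun δ : 𝕜 => δ) (𝓝 0)
  rcases le_total k a with hk | hk
  · exact hpast k hk
  induction k, hk using Int.leInduction with
  | base => exact hpast a le_rfl
  | succ k hak ih =>
    have hstep : (fun δ => f (x δ k) - f (p k)) =O[𝓝 0] fun δ => δ :=
      ((hf k).hasFDerivAt.isBigO_sub.comp_tendsto
        (tendsto_sub_nhds_zero_iff.1 (ih.trans_tendsto tendsto_id))).trans ih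
    have hforce : (fun δ : 𝕜 => δ • w (k + 1)) =O[𝓝 0] fun δ => δ :=
      IsBigO.of_bound ‖w (k + 1)‖ (Eventually.of_forall fun δ => by rw [norm_smul, mul_comm])
    refine (hstep.add hforce).congr_left fun δ => ?_
    rw [hx, hp]
    abel

end ForcedOrbit

theorem Ultrafilter.exists_tendsto_of_eventually_norm_le {α E : Type*} [NormedAddCommGroup E]
    [ProperSpace E] (U : Ultrafilter α) {φ : α → E} {R : ℝ} (h : ∀ᶠ t in U, ‖φ t‖ ≤ R) :
    ∃ y, ‖y‖ ≤ R ∧ Tendsto φ U (𝓝 y) := by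
  obtain ⟨y, hy, hφy⟩ := (isCompact_closedBall (0 : E) R).ultrafilter_le_nhds (U.map φ)
    (le_principal_iff.2 (h.mono fun t ht => mem_closedBall_zero_iff.2 ht))
  exact ⟨y, mem_closedBall_zero_iff.1 hy, hφy⟩

/-- Perron-type admissibility of the linear equation `u (k + 1) = A k (u k) + w (k + 1)`. -/
def HasBoundedResponse {E : Type*} [NormedAddCommGroup E] [NormedSpace ℝ E]
    (A : ℤ → E →L[ℝ] E) (C : ℝ) : Prop :=
  ∀ w : ℤ → E, (∀ k, ‖w k‖ ≤ 1) → ∀ a : ℤ, (∀ k ≤ a, w k = 0) →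
    ∃ u : ℤ → E, (∀ k, u (k + 1) = A k (u k) + w (k + 1)) ∧ ∀ k, ‖u k‖ ≤ C

section Shadowing

variable {m : ℕ}

local notation "E" => EuclideanSpace ℝ (Fin m)

theorem LipschitzShadowing.exists_eventually_shadow {f : E → E} {L d₀ : ℝ}
    (hshadow : LipschitzShadowing f L d₀) (hd₀ : 0 < d₀) {w : ℤ → E} (hw : ∀ k, ‖w k‖ ≤ 1)
    {x : ℝ → ℤ → E} (hx : ∀ δ k, x δ (k + 1) = f (x δ k) + δ • w (k + 1)) :
    ∃ q : ℝ → ℤ → E, ∀ᶠ δ in 𝓝[>] 0,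
      (∀ k, q δ (k + 1) = f (q δ k)) ∧ ∀ k, ‖x δ k - q δ k‖ ≤ 2 * L * δ := by
  have hsmall : ∀ᶠ δ in 𝓝[>] (0 : ℝ), 0 < δ ∧ 2 * δ ≤ d₀ :=
    eventually_mem_nhdsWithin.and <| nhdsWithin_le_nhds <|
      (eventually_lt_nhds (half_pos hd₀)).mono fun δ hδ => by linarith
  choose q hq using fun δ : ℝ => show ∃ q : ℤ → E, 0 < δ → 2 * δ ≤ d₀ →
      (∀ k, q (k + 1) = f (q k)) ∧ ∀ k, ‖x δ k - q k‖ ≤ 2 * L * δ by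
    by_cases hδ : 0 < δ ∧ 2 * δ ≤ d₀
    · refine (hshadow (2 * δ) (by linarith) hδ.2 (x δ) fun k => ?_).imp
        fun q hq _ _ => ⟨hq.1, fun k => (hq.2 k).trans_eq (by ring)⟩
      rw [hx, add_sub_cancel_left, norm_smul, Real.norm_of_nonneg hδ.1.le]
      nlinarith [hw (k + 1)]
    · exact ⟨x δ, fun h₁ h₂ => absurd ⟨h₁, h₂⟩ hδ⟩
  exact ⟨q, hsmall.mono fun δ hδ => hq δ hδ.1 hδ.2⟩

theorem hasBoundedResponse_of_lipschitzShadowing {f : E → E} {L d₀ : ℝ} (hd₀ : 0 < d₀)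
    (hshadow : LipschitzShadowing f L d₀) {p : ℤ → E} (hp : ∀ k, p (k + 1) = f (p k))
    {A : ℤ → E →L[ℝ] E} (hA : ∀ k, HasFDerivAt f (A k) (p k)) :
    HasBoundedResponse A (2 * L) := by
  intro w hw a hwa
  choose x hxa hx using fun δ : ℝ =>
    exists_forcedOrbit hp (w := δ • w) fun k hk => by rw [Pi.smul_apply, hwa k hk, smul_zero]
  have hxp : ∀ k, (fun δ => x δ k - p k) =O[𝓝 0] fun δ => δ :=
    isBigO_forcedOrbit_sub (fun k => (hA k).differentiableAt) hp hxa hx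
  obtain ⟨q, hq⟩ := hshadow.exists_eventually_shadow hd₀ hw hx
  have hq' := hq.and eventually_mem_nhdsWithin
  set U := Ultrafilter.of (𝓝[>] (0 : ℝ))
  have hU : (U : Filter ℝ) ≤ 𝓝[>] 0 := Ultrafilter.of_le _
  -- the response is the limit of the shadowing errors divided by `δ`
  choose u hu hlim using fun k => U.exists_tendsto_of_eventually_norm_le
    (φ := fun δ => δ⁻¹ • (x δ k - q δ k)) (R := 2 * L) <| hU <| hq'.mono fun δ hδ => by
      rw [norm_smul, norm_inv, Real.norm_of_nonneg (le_of_lt hδ.2), inv_mul_le_iff₀ hδ.2]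
      linarith [hδ.1.2 k]
  refine ⟨u, fun k => tendsto_nhds_unique (hlim (k + 1)) ?_, hu⟩
  have hqp : (fun δ => q δ k - p k) =O[𝓝[>] 0] fun δ => δ :=
    ((hxp k).mono nhdsWithin_le_nhds).sub (IsBigO.of_bound (2 * L) <| hq'.mono fun δ hδ => by
      rw [Real.norm_of_nonneg (le_of_lt hδ.2)]; exact hδ.1.2 k) |>.congr_left fun δ => by abel
  have hrem := ((hA k).isLittleO_sub_of_isBigO (tendsto_nhdsWithin_of_tendsto_nhds tendsto_id)
    ((hxp k).mono nhdsWithin_le_nhds) hqp).tendsto_inv_smul_nhds_zero.mono_left hU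
  have hlin := (((A k).continuous.tendsto (u k)).comp (hlim k)).add_const (w (k + 1))
  refine ((hrem.add hlin).congr' ?_).trans (by rw [zero_add])
  filter_upwards [hU hq'] with δ hδ
  simp only [id, Function.comp_apply, map_smul, map_sub, hx, Pi.smul_apply, hδ.1.1 k, smul_sub,
    smul_add, inv_smul_smul₀ (ne_of_gt (Set.mem_Ioi.1 hδ.2))]
  abel

end Shadowing

section Transition

variable {m : ℕ} (A : ℤ → (EuclideanSpace ℝ (Fin m) ≃L[ℝ] EuclideanSpace ℝ (Fin m)))

local notation "E" => EuclideanSpace ℝ (Fin m)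

theorem comp_phiNeg_succ (k : ℤ) (n : ℕ) :
    (A k : E →L[ℝ] E).comp (PhiNeg A k (n + 1)) = PhiNeg A (k + 1) n := by
  induction n generalizing k with
  | zero => ext x; simp [PhiNeg]
  | succ n ih =>
    change (A k : E →L[ℝ] E).comp
        ((PhiNeg A k (n + 1)).comp ((A (k + (n + 1 : ℕ))).symm : E →L[ℝ] E))
      = (PhiNeg A (k + 1) n).comp ((A (k + 1 + n)).symm : E →L[ℝ] E)
    rw [← ContinuousLinearMap.comp_assoc, ih, show k + ((n + 1 : ℕ) : ℤ) = k + 1 + n by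
      push_cast; ring]

theorem phi_self_zero : Phi A 0 0 = 1 := by
  simp [Phi, PhiPos]

theorem phi_succ_zero (k : ℤ) : Phi A (k + 1) 0 = (A k : E →L[ℝ] E).comp (Phi A k 0) := by
  rcases le_or_gt 0 k with hk | hk
  · rw [Phi, if_pos (by omega), Phi, if_pos hk, show (k + 1 - 0).toNat = (k - 0).toNat + 1 by omega,
      PhiPos, show (0 : ℤ) + ((k - 0).toNat : ℕ) = k by omega]
  · have hphi : Phi A k 0 = PhiNeg A k ((0 - (k + 1)).toNat + 1) := by
      rw [Phi, if_neg (by omega)]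
      congr 1
      omega
    rw [hphi, comp_phiNeg_succ]
    rcases (show k + 1 ≤ 0 by omega).eq_or_lt with hk1 | hk1
    · simp [hk1, Phi, PhiPos, PhiNeg]
    · rw [Phi, if_neg (by omega)]

theorem phi_succ_zero_apply (k : ℤ) (x : E) : Phi A (k + 1) 0 x = A k (Phi A k 0 x) := by
  rw [phi_succ_zero]; rfl

theorem phi_zero_apply_eq_symm (k : ℤ) (x : E) :
    Phi A k 0 x = (A k).symm (Phi A (k + 1) 0 x) := by
  rw [phi_succ_zero_apply, ContinuousLinearEquiv.symm_apply_apply]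

theorem phi_zero_apply_ne_zero {x : E} (hx : x ≠ 0) (k : ℤ) : Phi A k 0 x ≠ 0 := by
  induction k using Int.induction_on with
  | zero => simpa [phi_self_zero] using hx
  | succ k ih => rwa [phi_succ_zero_apply, Ne, (A k).map_eq_zero_iff]
  | pred k ih =>
    rwa [phi_zero_apply_eq_symm, sub_add_cancel, Ne, (A _).symm.map_eq_zero_iff]

theorem eq_phi_zero_apply_of_nonneg {h : ℤ → E} (hh : ∀ k ≥ 0, h (k + 1) = A k (h k)) :
    ∀ k ≥ 0, h k = Phi A k 0 (h 0) := by
  intro k hk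
  induction k, hk using Int.leInduction with
  | base => simp [phi_self_zero]
  | succ k hk ih => rw [hh k hk, ih, phi_succ_zero_apply]

theorem eq_phi_zero_apply_of_nonpos {h : ℤ → E} (hh : ∀ k < 0, h (k + 1) = A k (h k)) :
    ∀ k ≤ 0, h k = Phi A k 0 (h 0) := by
  intro k hk
  induction k, hk using Int.leInductionDown with
  | base => simp [phi_self_zero]
  | pred k hk ih =>
    rw [phi_zero_apply_eq_symm, sub_add_cancel, ← ih, ← sub_add_cancel k 1, hh _ (by omega),
      sub_add_cancel, ContinuousLinearEquiv.symm_apply_apply]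

theorem eq_phi_zero_apply {h : ℤ → E} (hh : ∀ k, h (k + 1) = A k (h k)) (k : ℤ) :
    h k = Phi A k 0 (h 0) :=
  (le_total 0 k).elim (eq_phi_zero_apply_of_nonneg A (fun k _ => hh k) k)
    (eq_phi_zero_apply_of_nonpos A (fun k _ => hh k) k)

end Transition

section UniformBound

variable {ι 𝕜 E F : Type*} [NontriviallyNormedField 𝕜] [CompleteSpace 𝕜] [NormedAddCommGroup E]
  [NormedSpace 𝕜 E] [FiniteDimensional 𝕜 E] [NormedAddCommGroup F] [NormedSpace 𝕜 F]

def boundedOrbits (P : ι → E →L[𝕜] F) : Submodule 𝕜 E where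
  carrier := {x | ∃ M, ∀ i, ‖P i x‖ ≤ M}
  add_mem' := by
    rintro x y ⟨Mx, hx⟩ ⟨My, hy⟩
    exact ⟨Mx + My, fun i => by
      rw [map_add]; exact (norm_add_le _ _).trans (add_le_add (hx i) (hy i))⟩
  zero_mem' := ⟨0, fun i => by simp⟩
  smul_mem' := by
    rintro c x ⟨M, hM⟩
    exact ⟨‖c‖ * M, fun i => by rw [map_smul, norm_smul]; gcongr; exact hM i⟩

theorem exists_norm_apply_le_of_mem_boundedOrbits (P : ι → E →L[𝕜] F) :
    ∃ K, 0 ≤ K ∧ ∀ x ∈ boundedOrbits P, ∀ i, ‖P i x‖ ≤ K * ‖x‖ := by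
  have : CompleteSpace (boundedOrbits P) := FiniteDimensional.complete 𝕜 _
  obtain ⟨K, hK⟩ := banach_steinhaus (g := fun i => (P i).comp (boundedOrbits P).subtypeL)
    fun x => x.2
  refine ⟨max K 0, le_max_right _ _, fun x hx i => ?_⟩
  calc ‖P i x‖ ≤ ‖(P i).comp (boundedOrbits P).subtypeL‖ * ‖(⟨x, hx⟩ : boundedOrbits P)‖ :=
        ((P i).comp (boundedOrbits P).subtypeL).le_opNorm ⟨x, hx⟩
    _ ≤ max K 0 * ‖x‖ := by
      gcongr
      exacts [(hK i).trans (le_max_left _ _), le_rfl]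

end UniformBound

section Response

variable {m : ℕ} {A : ℤ → (EuclideanSpace ℝ (Fin m) ≃L[ℝ] EuclideanSpace ℝ (Fin m))} {C : ℝ}

local notation "E" => EuclideanSpace ℝ (Fin m)

/-- A bounded solution differs from the bounded response by a bounded homogeneous solution, and
Banach–Steinhaus bounds those uniformly by their value at time `0`. -/
theorem HasBoundedResponse.exists_uniform_bound
    (hA : HasBoundedResponse (fun k => (A k : E →L[ℝ] E)) C) :
    ∃ D, ∀ w : ℤ → E, (∀ k, ‖w k‖ ≤ 1) → ∀ a : ℤ, (∀ k ≤ a, w k = 0) →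
      ∀ y : ℤ → E, (∀ k, y (k + 1) = A k (y k) + w (k + 1)) → y 0 = 0 →
      (∃ M, ∀ k, ‖y k‖ ≤ M) → ∀ k, ‖y k‖ ≤ D := by
  obtain ⟨K, hK0, hK⟩ := exists_norm_apply_le_of_mem_boundedOrbits fun k => Phi A k 0
  refine ⟨C + K * C, fun w hw a hwa y hy hy0 ⟨M, hM⟩ k => ?_⟩
  obtain ⟨u, hu, huC⟩ := hA w hw a hwa
  have hhom : ∀ k, y k - u k = Phi A k 0 (y 0 - u 0) :=
    eq_phi_zero_apply A (h := fun k => y k - u k) fun k => by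
      simp only [hy, hu, map_sub]
      abel
  have hbdd : y 0 - u 0 ∈ boundedOrbits fun k => Phi A k 0 :=
    ⟨M + C, fun k => (hhom k).symm ▸ (norm_sub_le _ _).trans (add_le_add (hM k) (huC k))⟩
  calc ‖y k‖ ≤ ‖u k‖ + ‖y k - u k‖ := norm_le_insert' _ _
    _ ≤ C + K * ‖y 0 - u 0‖ := add_le_add (huC k) (hhom k ▸ hK _ hbdd k)
    _ ≤ C + K * C := by rw [hy0, zero_sub, norm_neg]; gcongr; exact huC 0

end Response

noncomputable section Window

variable {E : Type*} [NormedAddCommGroup E] (φ : ℤ → E) (a b : ℤ)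

def windowSum (k : ℤ) : ℝ :=
  ∑ j ∈ Finset.Ioc a (min k b), ‖φ j‖⁻¹

def windowForcing [NormedSpace ℝ E] (j : ℤ) : E :=
  if a < j ∧ j ≤ b then ‖φ j‖⁻¹ • φ j else 0

variable {φ a b}

theorem windowSum_nonneg (k : ℤ) : 0 ≤ windowSum φ a b k :=
  Finset.sum_nonneg fun _ _ => inv_nonneg.2 (norm_nonneg _)

theorem windowSum_eq_zero {k : ℤ} (hk : k ≤ a) : windowSum φ a b k = 0 :=
  Finset.sum_eq_zero fun j hj => by simp only [Finset.mem_Ioc] at hj; omega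

theorem windowSum_le (k : ℤ) : windowSum φ a b k ≤ windowSum φ a b b :=
  Finset.sum_le_sum_of_subset_of_nonneg (Finset.Ioc_subset_Ioc_right (by omega))
    fun _ _ _ => inv_nonneg.2 (norm_nonneg _)

theorem windowSum_of_le {k : ℤ} (hk : b ≤ k) : windowSum φ a b k = windowSum φ a b b := by
  rw [windowSum, windowSum, min_eq_right hk, min_self]

theorem windowSum_succ (k : ℤ) : windowSum φ a b (k + 1) =
    windowSum φ a b k + if a < k + 1 ∧ k + 1 ≤ b then ‖φ (k + 1)‖⁻¹ else 0 := by
  unfold windowSum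
  split_ifs with h
  · rw [show Finset.Ioc a (min (k + 1) b) = insert (k + 1) (Finset.Ioc a (min k b)) by
      ext j; simp only [Finset.mem_Ioc, Finset.mem_insert]; omega,
      Finset.sum_insert (by simp), add_comm]
  · rw [add_zero, show Finset.Ioc a (min (k + 1) b) = Finset.Ioc a (min k b) by
      ext j; simp only [Finset.mem_Ioc]; omega]

theorem card_div_le_windowSum (hab : a ≤ b) {M : ℝ} (hφ : ∀ j, a < j → j ≤ b → 0 < ‖φ j‖)
    (hM : ∀ j, a < j → j ≤ b → ‖φ j‖ ≤ M) : ((b - a : ℤ) : ℝ) / M ≤ windowSum φ a b b := by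
  have hcard := Finset.card_nsmul_le_sum (Finset.Ioc a b) (fun j => ‖φ j‖⁻¹) M⁻¹ fun j hj => by
    simp only [Finset.mem_Ioc] at hj
    exact inv_anti₀ (hφ j hj.1 hj.2) (hM j hj.1 hj.2)
  have hn : (((b - a).toNat : ℕ) : ℝ) = ((b - a : ℤ) : ℝ) := by
    exact_mod_cast Int.toNat_of_nonneg (by omega)
  rw [windowSum, min_self]
  rwa [Int.card_Ioc, nsmul_eq_mul, hn, ← div_eq_mul_inv] at hcard

theorem norm_windowForcing_le [NormedSpace ℝ E] (j : ℤ) : ‖windowForcing φ a b j‖ ≤ 1 := by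
  unfold windowForcing
  split_ifs
  · rcases eq_or_ne (φ j) 0 with h | h
    · simp [h]
    · rw [norm_smul, norm_inv, norm_norm, inv_mul_cancel₀ (norm_ne_zero_iff.2 h)]
  · simp

theorem windowForcing_eq_zero [NormedSpace ℝ E] {j : ℤ} (hj : j ≤ a) : windowForcing φ a b j = 0 :=
  if_neg (by omega)

theorem windowSum_sub_smul_succ [NormedSpace ℝ E] {A : ℤ → E →L[ℝ] E}
    (hφ : ∀ k, φ (k + 1) = A k (φ k))
    (T : ℝ) (k : ℤ) : (windowSum φ a b (k + 1) - T) • φ (k + 1) =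
      A k ((windowSum φ a b k - T) • φ k) + windowForcing φ a b (k + 1) := by
  rw [map_smul, ← hφ, windowSum_succ, windowForcing]
  split_ifs <;> module

end Window

theorem tendsto_zero_of_abs_mul_le {l : Filter ℤ} (hl : Tendsto (fun k : ℤ => |(k : ℝ)|) l atTop)
    {u : ℤ → ℝ} (hu : ∀ k, 0 ≤ u k) {D : ℝ} (hD : ∀ᶠ k in l, |((k : ℤ) : ℝ)| * u k ≤ D) :
    Tendsto u l (𝓝 0) :=
  squeeze_zero' (Eventually.of_forall hu)
    ((hD.and (hl.eventually_gt_atTop 0)).mono fun _ hk => (le_div_iff₀' hk.2).2 hk.1)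
    (tendsto_const_nhds.div_atTop hl)

section Decay

variable {m : ℕ} {A : ℤ → (EuclideanSpace ℝ (Fin m) ≃L[ℝ] EuclideanSpace ℝ (Fin m))} {C : ℝ}

local notation "E" => EuclideanSpace ℝ (Fin m)

/-- Perron's argument: for the forcing `φ k / ‖φ k‖` on the window `(0, n]`, the bounded solution
`windowSum • φ` has norm at least `(n / M) ‖φ n‖` at time `n`, so `‖φ n‖ ≤ M D / n`. -/
theorem HasBoundedResponse.mem_Bplus (hA : HasBoundedResponse (fun k => (A k : E →L[ℝ] E)) C)
    {x : E} {M : ℝ} (hM : ∀ k ≥ 0, ‖Phi A k 0 x‖ ≤ M) : x ∈ Bplus A := by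
  obtain ⟨D, hD⟩ := hA.exists_uniform_bound
  rcases eq_or_ne x 0 with rfl | hx
  · simp [Bplus]
  set φ : ℤ → E := fun k => Phi A k 0 x
  have hφ0 : ∀ k, 0 < ‖φ k‖ := fun k => norm_pos_iff.2 (phi_zero_apply_ne_zero A hx k)
  have hM0 : 0 < M := (hφ0 0).trans_le (hM 0 le_rfl)
  refine tendsto_zero_of_abs_mul_le (tendsto_abs_atTop_atTop.comp tendsto_intCast_atTop_atTop)
    (fun k => norm_nonneg _) (D := M * D) ((eventually_ge_atTop 0).mono fun n hn => ?_)
  have hsol := hD _ norm_windowForcing_le 0 (fun _ => windowForcing_eq_zero)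
    (fun k => (windowSum φ 0 n k - 0) • φ k)
    (windowSum_sub_smul_succ (A := fun k => (A k : E →L[ℝ] E)) (phi_succ_zero_apply A · x) 0)
    (by rw [windowSum_eq_zero le_rfl, sub_zero, zero_smul]) ⟨windowSum φ 0 n n * M, fun k => ?_⟩ n
  · have hlow := card_div_le_windowSum (φ := φ) hn (fun j _ _ => hφ0 j) fun j hj _ => hM j hj.le
    rw [sub_zero, norm_smul, Real.norm_of_nonneg (windowSum_nonneg n)] at hsol
    rw [sub_zero, div_le_iff₀ hM0] at hlow
    rw [abs_of_nonneg (by exact_mod_cast hn)]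
    nlinarith [hφ0 n]
  · rw [sub_zero, norm_smul, Real.norm_of_nonneg (windowSum_nonneg k)]
    rcases le_total k 0 with hk | hk
    · rw [windowSum_eq_zero hk, zero_mul]
      exact mul_nonneg (windowSum_nonneg n) hM0.le
    · exact mul_le_mul (windowSum_le k) (hM k hk) (norm_nonneg _) (windowSum_nonneg n)

theorem HasBoundedResponse.mem_Bminus (hA : HasBoundedResponse (fun k => (A k : E →L[ℝ] E)) C)
    {x : E} {M : ℝ} (hM : ∀ k ≤ 0, ‖Phi A k 0 x‖ ≤ M) : x ∈ Bminus A := by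
  obtain ⟨D, hD⟩ := hA.exists_uniform_bound
  rcases eq_or_ne x 0 with rfl | hx
  · simp [Bminus]
  set φ : ℤ → E := fun k => Phi A k 0 x
  have hφ0 : ∀ k, 0 < ‖φ k‖ := fun k => norm_pos_iff.2 (phi_zero_apply_ne_zero A hx k)
  have hM0 : 0 < M := (hφ0 0).trans_le (hM 0 le_rfl)
  refine tendsto_zero_of_abs_mul_le
    (tendsto_abs_atBot_atTop.comp (tendsto_intCast_atBot_iff.2 tendsto_id))
    (fun k => norm_nonneg _) (D := M * D) ((eventually_le_atBot 0).mono fun n hn => ?_)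
  have hsol := hD _ norm_windowForcing_le n (fun _ => windowForcing_eq_zero)
    (fun k => (windowSum φ n 0 k - windowSum φ n 0 0) • φ k)
    (windowSum_sub_smul_succ (A := fun k => (A k : E →L[ℝ] E)) (phi_succ_zero_apply A · x) _)
    (by rw [sub_self, zero_smul]) ⟨windowSum φ n 0 0 * M, fun k => ?_⟩ n
  · have hlow := card_div_le_windowSum (φ := φ) hn (fun j _ _ => hφ0 j) fun j _ hj => hM j hj
    rw [windowSum_eq_zero le_rfl, zero_sub, norm_smul, norm_neg,
      Real.norm_of_nonneg (windowSum_nonneg 0)] at hsol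
    rw [Int.cast_sub, Int.cast_zero, zero_sub, div_le_iff₀ hM0] at hlow
    rw [abs_of_nonpos (by exact_mod_cast hn)]
    nlinarith [hφ0 n]
  · rw [norm_smul]
    rcases le_total k 0 with hk | hk
    · rw [Real.norm_of_nonpos (by linarith [windowSum_le (φ := φ) (a := n) (b := 0) k])]
      exact mul_le_mul (by linarith [windowSum_nonneg (φ := φ) (a := n) (b := 0) k]) (hM k hk)
        (norm_nonneg _) (windowSum_nonneg 0)
    · rw [windowSum_of_le hk, sub_self, norm_zero, zero_mul]
      exact mul_nonneg (windowSum_nonneg 0) hM0.le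

end Decay

/-- Split `v` through the bounded response `s` to a unit kick in direction `v` at time `0`:
`s` continues `Φ(k,0) (s 0)` forwards, and `s - w` continues `Φ(k,0) (s 0 - w 0)` backwards. -/
theorem HasBoundedResponse.exists_add_mem {m : ℕ}
    {A : ℤ → (EuclideanSpace ℝ (Fin m) ≃L[ℝ] EuclideanSpace ℝ (Fin m))} {C : ℝ}
    (hA : HasBoundedResponse (fun k => (A k : EuclideanSpace ℝ (Fin m) →L[ℝ] _)) C)
    (v : EuclideanSpace ℝ (Fin m)) : ∃ x ∈ Bplus A, ∃ y ∈ Bminus A, v = x + y := by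
  set c := ‖v‖ + 1
  have hc : 0 < c := by positivity
  set w : ℤ → EuclideanSpace ℝ (Fin m) := Pi.single 0 (c⁻¹ • v)
  have hw0 : ∀ k ≠ 0, w k = 0 := fun k hk => Pi.single_eq_of_ne hk _
  have hw₀ : w 0 = c⁻¹ • v := Pi.single_eq_same _ _
  have hw : ∀ k, ‖w k‖ ≤ 1 := fun k => by
    rcases eq_or_ne k 0 with rfl | hk
    · rw [hw₀, norm_smul, norm_inv, Real.norm_of_nonneg hc.le, inv_mul_le_one₀ hc]
      linarith
    · simp [hw0 k hk]
  obtain ⟨s, hs, hsC⟩ := hA w hw (-1) fun k hk => hw0 k (by omega)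
  have hfwd := eq_phi_zero_apply_of_nonneg A (h := s) fun k hk => by
    rw [hs, hw0 _ (by omega), add_zero]; rfl
  have hbwd := eq_phi_zero_apply_of_nonpos A (h := fun k => s k - w k) fun k hk => by
    rw [hs, add_sub_cancel_right, hw0 k hk.ne, sub_zero]; rfl
  refine ⟨c • s 0, hA.mem_Bplus (M := c * C) fun k hk => ?_,
    -(c • (s 0 - w 0)), hA.mem_Bminus (M := c * (C + 1)) fun k hk => ?_, ?_⟩
  · rw [map_smul, ← hfwd k hk, norm_smul, Real.norm_of_nonneg hc.le]
    exact mul_le_mul_of_nonneg_left (hsC k) hc.le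
  · rw [map_neg, map_smul, norm_neg, ← hbwd k hk, norm_smul, Real.norm_of_nonneg hc.le]
    exact mul_le_mul_of_nonneg_left ((norm_sub_le _ _).trans (add_le_add (hsC k) (hw k))) hc.le
  · rw [← sub_eq_add_neg, ← smul_sub, sub_sub_cancel, hw₀, smul_inv_smul₀ hc.ne']

theorem transverse_of_lipschitz_shadowing_general
    {m : ℕ} (f : EuclideanSpace ℝ (Fin m) → EuclideanSpace ℝ (Fin m))
    (hf : ContDiff ℝ 1 f)
    (L d₀ : ℝ) (hd₀ : 0 < d₀) (hshadow : LipschitzShadowing f L d₀)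
    (p : ℤ → EuclideanSpace ℝ (Fin m)) (hp : ∀ k : ℤ, p (k + 1) = f (p k))
    (A : ℤ → (EuclideanSpace ℝ (Fin m) ≃L[ℝ] EuclideanSpace ℝ (Fin m)))
    (hA : ∀ k : ℤ,
      ((A k : EuclideanSpace ℝ (Fin m) →L[ℝ] EuclideanSpace ℝ (Fin m))) = fderiv ℝ f (p k)) :
    ∀ u : EuclideanSpace ℝ (Fin m), ∃ x ∈ Bplus A, ∃ y ∈ Bminus A, u = x + y := by
  have hderiv : ∀ k, HasFDerivAt f (A k : EuclideanSpace ℝ (Fin m) →L[ℝ] _) (p k) := fun k =>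
    hA k ▸ (hf.differentiable one_ne_zero (p k)).hasFDerivAt
  exact (hasBoundedResponse_of_lipschitzShadowing hd₀ hshadow hp hderiv).exists_add_mem

/-- **Main lemma of Pilyugin–Tikhomirov.** If a C¹ diffeomorphism `f` has the Lipschitz
shadowing property, then along any trajectory `{p_k}`, with `A_k = Df(p_k)` uniformly
invertible, the subspaces `B⁺(𝒜)` and `B⁻(𝒜)` are transverse: `B⁺(𝒜) + B⁻(𝒜) = ℝ^m`. -/
theorem transverse_of_lipschitz_shadowing
    {m : ℕ} (f g : EuclideanSpace ℝ (Fin m) → EuclideanSpace ℝ (Fin m))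
    (hf : ContDiff ℝ 1 f) (hg : ContDiff ℝ 1 g)
    (hgf : Function.LeftInverse g f) (hfg : Function.RightInverse g f)
    (L d₀ : ℝ) (hL : 0 < L) (hd₀ : 0 < d₀) (hshadow : LipschitzShadowing f L d₀)
    (p : ℤ → EuclideanSpace ℝ (Fin m)) (hp : ∀ k : ℤ, p (k + 1) = f (p k))
    (A : ℤ → (EuclideanSpace ℝ (Fin m) ≃L[ℝ] EuclideanSpace ℝ (Fin m)))
    (hA : ∀ k : ℤ,
      ((A k : EuclideanSpace ℝ (Fin m) →L[ℝ] EuclideanSpace ℝ (Fin m))) = fderiv ℝ f (p k))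
    (N : ℝ) (hN : 0 < N)
    (hAbound : ∀ k : ℤ,
      ‖(A k : EuclideanSpace ℝ (Fin m) →L[ℝ] EuclideanSpace ℝ (Fin m))‖ ≤ N)
    (hAinvbound : ∀ k : ℤ,
      ‖((A k).symm : EuclideanSpace ℝ (Fin m) →L[ℝ] EuclideanSpace ℝ (Fin m))‖ ≤ N)
    (hunif : ∀ μ : ℝ, 0 < μ → ∃ δ : ℝ, 0 < δ ∧
      ∀ k : ℤ, ∀ v : EuclideanSpace ℝ (Fin m), ‖v‖ ≤ δ →
        ‖f (p k + v) - p (k + 1) - A k v‖ ≤ μ * ‖v‖) :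
    ∀ u : EuclideanSpace ℝ (Fin m), ∃ x ∈ Bplus A, ∃ y ∈ Bminus A, u = x + y :=
  transverse_of_lipschitz_shadowing_general f hf L d₀ hd₀ hshadow p hp A hA
end
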